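/- Let ω ∈ [0,1] and let B ∈ C^{N×N} be partitioned as B = [[B₁₁, B₁₂], [B₂₁, B₂₂]] with B₁₁ and B₂₂ square. Suppose B_ω is a nonsingular M-matrix. Then B₁₁ and B₂₂ are invertible, and with S₁₁ = B₁₁ − B₁₂B₂₂⁻¹B₂₁ and S₂₂ = B₂₂ − B₂₁B₁₁⁻¹B₁₂, the four matrices (B₁₁)_ω, (B₂₂)_ω, (S₁₁)_ω and (S₂₂)_ω are nonsingular M-matrices. Moreover, if B_ω·1 > 0 entrywise, then (B₁₁)_ω·1 > 0, (B₂₂)_ω·1 > 0, (S₁₁)_ω·1 > 0 and (S₂₂)_ω·1 > 0. -/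

import Mathlib

open Matrix Filter Kronecker

noncomputable section

/-- The ω-weighted linear functional `z ↦ ω·Re z + (1-ω)·Im z`. -/
def wlin (ω : ℝ) (z : ℂ) : ℝ := ω * z.re + (1 - ω) * z.im

/-- The ω-comparison matrix of a complex square matrix. -/
def omegaComp {N : Type*} [DecidableEq N] (ω : ℝ) (B : Matrix N N ℂ) : Matrix N N ℝ :=
  Matrix.of fun i j => if i = j then wlin ω (B i i) else -‖B i j‖

/-- A real square matrix is a nonsingular M-matrix: nonpositive off-diagonal entries and
`M *ᵥ u > 0` entrywise for some entrywise positive `u`. -/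
def IsNonsingMMatrix {N : Type*} [Fintype N] (M : Matrix N N ℝ) : Prop :=
  (∀ i j, i ≠ j → M i j ≤ 0) ∧ ∃ u : N → ℝ, (∀ i, 0 < u i) ∧ ∀ i, 0 < (M *ᵥ u) i

/-- Entrywise absolute value of a complex matrix. -/
def cabs {α β : Type*} (M : Matrix α β ℂ) : Matrix α β ℝ :=
  Matrix.of fun i j => ‖M i j‖

/-!
Since `ω·Re z + (1-ω)·Im z ≤ |z|`, the matrix `A_ω` is entrywise below the classical comparison
matrix of `A`, so `A_ω |y| ≤ |A y|` for every complex vector `y`. A nonsingular M-matrix `M` is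
inverse-monotone (`M s ≤ M t` implies `s ≤ t`: look at the row where `(s - t) / u` is maximal).
Together these give `A v = 0 → v = 0`. If `B_ω u > 0` with `u = (u₁, u₂) > 0`, then for
`X = B₂₂⁻¹ B₂₁` the bound `|X| u₁ ≤ u₂` follows from `(B₂₂)_ω (|X| u₁) ≤ |B₂₁| u₁ < (B₂₂)_ω u₂`.
Hence `(S₁₁)_ω u₁ ≥ (B₁₁)_ω u₁ - |B₁₂| |X| u₁ ≥ (B₁₁)_ω u₁ - |B₁₂| u₂ > 0`, and symmetrically
for `S₂₂`.
-/

section Weighted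

variable {ω : ℝ}

lemma wlin_le_norm (hω : ω ∈ Set.Icc (0 : ℝ) 1) (z : ℂ) : wlin ω z ≤ ‖z‖ := by
  obtain ⟨h0, h1⟩ := hω
  have h1' : 0 ≤ 1 - ω := sub_nonneg.2 h1
  calc wlin ω z = ω * z.re + (1 - ω) * z.im := rfl
    _ ≤ ω * ‖z‖ + (1 - ω) * ‖z‖ := by
        gcongr
        exacts [Complex.re_le_norm z, Complex.im_le_norm z]
    _ = ‖z‖ := by ring

lemma wlin_sub (z w : ℂ) : wlin ω (z - w) = wlin ω z - wlin ω w := by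
  simp only [wlin, Complex.sub_re, Complex.sub_im]
  ring

end Weighted

section Order

variable {ι κ ν : Type*}

lemma mulVec_le_mulVec_of_le [Fintype κ] {M N : Matrix ι κ ℝ} (h : ∀ i j, M i j ≤ N i j)
    {v : κ → ℝ} (hv : 0 ≤ v) : M *ᵥ v ≤ N *ᵥ v :=
  fun i => dotProduct_le_dotProduct_of_nonneg_right (h i) hv

lemma cabs_mulVec_nonneg [Fintype κ] (M : Matrix ι κ ℂ) {v : κ → ℝ} (hv : 0 ≤ v) :
    0 ≤ cabs M *ᵥ v :=
  fun i => dotProduct_nonneg_of_nonneg (fun j => norm_nonneg (M i j)) hv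

lemma cabs_mulVec_mono [Fintype κ] (M : Matrix ι κ ℂ) {v w : κ → ℝ} (hvw : v ≤ w) :
    cabs M *ᵥ v ≤ cabs M *ᵥ w :=
  fun i => dotProduct_le_dotProduct_of_nonneg_left hvw (fun j => norm_nonneg (M i j))

lemma cabs_mul_le [Fintype ι] (M : Matrix ν ι ℂ) (N : Matrix ι κ ℂ) (i : ν) (j : κ) :
    cabs (M * N) i j ≤ (cabs M * cabs N) i j := by
  simp only [cabs, of_apply, mul_apply]
  exact (norm_sum_le _ _).trans_eq (by simp only [norm_mul])

theorem IsNonsingMMatrix.le_of_mulVec_le [Fintype ι] {M : Matrix ι ι ℝ}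
    (hM : IsNonsingMMatrix M) {s t : ι → ℝ} (h : M *ᵥ s ≤ M *ᵥ t) : s ≤ t := by
  obtain ⟨hoff, u, hu, hMu⟩ := hM
  by_contra hst
  obtain ⟨k, hk⟩ : ∃ k, t k < s k := by simpa [Pi.le_def] using hst
  set w := s - t
  obtain ⟨i, -, hmax⟩ :=
    Finset.exists_max_image Finset.univ (fun j => w j / u j) ⟨k, Finset.mem_univ k⟩
  set r := w i / u i
  have hr : 0 < r := (div_pos (sub_pos.2 hk) (hu k)).trans_le (hmax k (Finset.mem_univ k))
  have hw : ∀ j, w j ≤ r * u j := fun j => (div_le_iff₀ (hu j)).1 (hmax j (Finset.mem_univ j))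
  have hterm : ∀ j, 0 ≤ M i j * (w j - r * u j) := by
    intro j
    by_cases hij : i = j
    · subst hij
      simp [r, div_mul_cancel₀ _ (hu i).ne']
    · exact mul_nonneg_of_nonpos_of_nonpos (hoff i j hij) (sub_nonpos.2 (hw j))
  have hdom : r * (M *ᵥ u) i ≤ (M *ᵥ w) i := by
    have hdiff : (M *ᵥ w) i - r * (M *ᵥ u) i = ∑ j, M i j * (w j - r * u j) := by
      simp only [mulVec, dotProduct, Finset.mul_sum, ← Finset.sum_sub_distrib]
      exact Finset.sum_congr rfl fun j _ => by ring
    rw [← sub_nonneg, hdiff]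
    exact Finset.sum_nonneg fun j _ => hterm j
  have hMw : (M *ᵥ w) i ≤ 0 := by simpa [w, mulVec_sub] using h i
  linarith [mul_pos hr (hMu i)]

end Order

section Comparison

variable {ι κ : Type*} {ω : ℝ}

lemma omegaComp_mulVec_apply [Fintype ι] [DecidableEq ι] (A : Matrix ι ι ℂ) (u : ι → ℝ)
    (i : ι) :
    (omegaComp ω A *ᵥ u) i
      = wlin ω (A i i) * u i - ∑ j ∈ Finset.univ.erase i, ‖A i j‖ * u j := by
  simp only [mulVec, dotProduct, omegaComp, of_apply]
  rw [← Finset.add_sum_erase _ _ (Finset.mem_univ i), if_pos rfl, sub_eq_add_neg,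
    ← Finset.sum_neg_distrib]
  congr 1
  exact Finset.sum_congr rfl fun j hj => by
    rw [if_neg (Finset.ne_of_mem_erase hj).symm, neg_mul]

lemma isNonsingMMatrix_omegaComp [Fintype ι] [DecidableEq ι] {A : Matrix ι ι ℂ}
    {u : ι → ℝ} (hu : ∀ i, 0 < u i) (h : ∀ i, 0 < (omegaComp ω A *ᵥ u) i) :
    IsNonsingMMatrix (omegaComp ω A) := by
  refine ⟨fun i j hij => ?_, u, hu, h⟩
  simp only [omegaComp, of_apply, if_neg hij, neg_nonpos, norm_nonneg]

lemma omegaComp_mulVec_norm_le [Fintype ι] [DecidableEq ι] (hω : ω ∈ Set.Icc (0 : ℝ) 1)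
    (A : Matrix ι ι ℂ) (y : ι → ℂ) (i : ι) :
    (omegaComp ω A *ᵥ fun j => ‖y j‖) i ≤ ‖(A *ᵥ y) i‖ := by
  have hsplit : (A *ᵥ y) i = A i i * y i + ∑ j ∈ Finset.univ.erase i, A i j * y j :=
    (Finset.add_sum_erase Finset.univ (fun j => A i j * y j) (Finset.mem_univ i)).symm
  rw [omegaComp_mulVec_apply, hsplit]
  calc wlin ω (A i i) * ‖y i‖ - ∑ j ∈ Finset.univ.erase i, ‖A i j‖ * ‖y j‖
      ≤ ‖A i i * y i‖ - ‖∑ j ∈ Finset.univ.erase i, A i j * y j‖ := by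
        rw [norm_mul]
        gcongr
        · exact wlin_le_norm hω _
        · exact (norm_sum_le _ _).trans_eq (by simp only [norm_mul])
    _ ≤ _ := norm_sub_le_norm_add _ _

theorem isUnit_det_of_isNonsingMMatrix_omegaComp [Fintype ι] [DecidableEq ι]
    (hω : ω ∈ Set.Icc (0 : ℝ) 1) {A : Matrix ι ι ℂ} (hA : IsNonsingMMatrix (omegaComp ω A)) :
    IsUnit A.det := by
  rw [isUnit_iff_ne_zero, Ne, ← exists_mulVec_eq_zero_iff]
  rintro ⟨v, hv, hAv⟩
  have hle : (fun j => ‖v j‖) ≤ 0 :=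
    hA.le_of_mulVec_le fun i => by simpa [hAv] using omegaComp_mulVec_norm_le hω A v i
  exact hv (funext fun j => norm_le_zero_iff.1 (hle j))

lemma cabs_mulVec_le_of_mul_eq [Fintype ι] [DecidableEq ι] [Fintype κ]
    (hω : ω ∈ Set.Icc (0 : ℝ) 1) {A : Matrix ι ι ℂ} (hA : IsNonsingMMatrix (omegaComp ω A))
    {X C : Matrix ι κ ℂ} (hAX : A * X = C) {u : κ → ℝ} (hu : 0 ≤ u) {v : ι → ℝ}
    (h : cabs C *ᵥ u ≤ omegaComp ω A *ᵥ v) :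
    cabs X *ᵥ u ≤ v := by
  refine hA.le_of_mulVec_le (le_trans ?_ h)
  rw [mulVec_mulVec, ← hAX]
  exact mulVec_le_mulVec_of_le (fun i j => omegaComp_mulVec_norm_le hω A (fun l => X l j) i) hu

lemma omegaComp_sub_mulVec_le [Fintype ι] [DecidableEq ι] (hω : ω ∈ Set.Icc (0 : ℝ) 1)
    (P Q : Matrix ι ι ℂ) {u : ι → ℝ} (hu : 0 ≤ u) :
    omegaComp ω P *ᵥ u - cabs Q *ᵥ u ≤ omegaComp ω (P - Q) *ᵥ u := by
  rw [← sub_mulVec]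
  refine mulVec_le_mulVec_of_le (fun i j => ?_) hu
  by_cases hij : i = j
  · subst hij
    simp only [Matrix.sub_apply, omegaComp, cabs, of_apply, if_true, wlin_sub]
    linarith [wlin_le_norm hω (Q i i)]
  · simp only [Matrix.sub_apply, omegaComp, cabs, of_apply, if_neg hij]
    linarith [norm_sub_le (P i j) (Q i j)]

theorem omegaComp_schur_mulVec_pos [Fintype ι] [DecidableEq ι] [Fintype κ] [DecidableEq κ]
    (hω : ω ∈ Set.Icc (0 : ℝ) 1) {A : Matrix ι ι ℂ} {B : Matrix ι κ ℂ} {C : Matrix κ ι ℂ}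
    {D : Matrix κ κ ℂ} {u : ι → ℝ} {v : κ → ℝ} (hu : ∀ i, 0 < u i) (hv : ∀ j, 0 < v j)
    (hAB : ∀ i, (cabs B *ᵥ v) i < (omegaComp ω A *ᵥ u) i)
    (hCD : ∀ j, (cabs C *ᵥ u) j < (omegaComp ω D *ᵥ v) j) :
    ∀ i, 0 < (omegaComp ω (A - B * D⁻¹ * C) *ᵥ u) i := by
  have hu0 : 0 ≤ u := fun i => (hu i).le
  have hD : IsNonsingMMatrix (omegaComp ω D) :=
    isNonsingMMatrix_omegaComp hv fun j => (cabs_mulVec_nonneg C hu0 j).trans_lt (hCD j)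
  have hX : cabs (D⁻¹ * C) *ᵥ u ≤ v :=
    cabs_mulVec_le_of_mul_eq hω hD
      (mul_nonsing_inv_cancel_left _ _ (isUnit_det_of_isNonsingMMatrix_omegaComp hω hD)) hu0
      fun j => (hCD j).le
  have hBX : cabs (B * (D⁻¹ * C)) *ᵥ u ≤ cabs B *ᵥ v := by
    refine le_trans ?_ (cabs_mulVec_mono B hX)
    rw [mulVec_mulVec]
    exact mulVec_le_mulVec_of_le (cabs_mul_le B _) hu0
  intro i
  calc 0 < (omegaComp ω A *ᵥ u) i - (cabs B *ᵥ v) i := sub_pos.2 (hAB i)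
    _ ≤ (omegaComp ω A *ᵥ u) i - (cabs (B * (D⁻¹ * C)) *ᵥ u) i := by linarith [hBX i]
    _ ≤ _ := by
      rw [Matrix.mul_assoc]
      exact omegaComp_sub_mulVec_le hω A _ hu0 i

lemma omegaComp_fromBlocks [DecidableEq ι] [DecidableEq κ] (A : Matrix ι ι ℂ)
    (B : Matrix ι κ ℂ) (C : Matrix κ ι ℂ) (D : Matrix κ κ ℂ) :
    omegaComp ω (fromBlocks A B C D)
      = fromBlocks (omegaComp ω A) (-cabs B) (-cabs C) (omegaComp ω D) := by
  ext (i | i) (j | j) <;> simp [omegaComp, cabs]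

lemma omegaComp_fromBlocks_mulVec_pos_iff [Fintype ι] [DecidableEq ι] [Fintype κ]
    [DecidableEq κ] {A : Matrix ι ι ℂ} {B : Matrix ι κ ℂ} {C : Matrix κ ι ℂ} {D : Matrix κ κ ℂ}
    {u : ι ⊕ κ → ℝ} :
    (∀ i, 0 < (omegaComp ω (fromBlocks A B C D) *ᵥ u) i) ↔
      (∀ i, (cabs B *ᵥ (u ∘ Sum.inr)) i < (omegaComp ω A *ᵥ (u ∘ Sum.inl)) i) ∧
      (∀ j, (cabs C *ᵥ (u ∘ Sum.inl)) j < (omegaComp ω D *ᵥ (u ∘ Sum.inr)) j) := by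
  simp only [omegaComp_fromBlocks, fromBlocks_mulVec, neg_mulVec, Sum.forall, Sum.elim_inl,
    Sum.elim_inr, Pi.add_apply, Pi.neg_apply, lt_add_neg_iff_lt, lt_neg_add_iff_lt]

theorem omegaComp_fromBlocks_schur_mulVec_pos [Fintype ι] [DecidableEq ι] [Fintype κ]
    [DecidableEq κ] (hω : ω ∈ Set.Icc (0 : ℝ) 1) {A : Matrix ι ι ℂ} {B : Matrix ι κ ℂ}
    {C : Matrix κ ι ℂ} {D : Matrix κ κ ℂ} {u : ι ⊕ κ → ℝ} (hu : ∀ i, 0 < u i)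
    (h : ∀ i, 0 < (omegaComp ω (fromBlocks A B C D) *ᵥ u) i) :
    (∀ i, 0 < (omegaComp ω A *ᵥ (u ∘ Sum.inl)) i) ∧
    (∀ j, 0 < (omegaComp ω D *ᵥ (u ∘ Sum.inr)) j) ∧
    (∀ i, 0 < (omegaComp ω (A - B * D⁻¹ * C) *ᵥ (u ∘ Sum.inl)) i) ∧
    (∀ j, 0 < (omegaComp ω (D - C * A⁻¹ * B) *ᵥ (u ∘ Sum.inr)) j) := by
  obtain ⟨hAB, hCD⟩ := omegaComp_fromBlocks_mulVec_pos_iff.1 h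
  have hu₁ : ∀ i, 0 < (u ∘ Sum.inl) i := fun i => hu _
  have hu₂ : ∀ j, 0 < (u ∘ Sum.inr) j := fun j => hu _
  exact ⟨fun i => (cabs_mulVec_nonneg B (fun j => (hu₂ j).le) i).trans_lt (hAB i),
    fun j => (cabs_mulVec_nonneg C (fun i => (hu₁ i).le) j).trans_lt (hCD j),
    omegaComp_schur_mulVec_pos hω hu₁ hu₂ hAB hCD,
    omegaComp_schur_mulVec_pos hω hu₂ hu₁ hCD hAB⟩

end Comparison

/-- If `B_ω` is a nonsingular M-matrix for a partitioned complex matrix `B`, then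
the diagonal blocks are invertible, the ω-comparison matrices of the diagonal blocks and of both
Schur complements are nonsingular M-matrices, and positivity of `B_ω·1` is inherited. -/
theorem stmt1 {m n : ℕ} (ω : ℝ) (hω : ω ∈ Set.Icc (0 : ℝ) 1)
    (B11 : Matrix (Fin m) (Fin m) ℂ) (B12 : Matrix (Fin m) (Fin n) ℂ)
    (B21 : Matrix (Fin n) (Fin m) ℂ) (B22 : Matrix (Fin n) (Fin n) ℂ)
    (hM : IsNonsingMMatrix (omegaComp ω (Matrix.fromBlocks B11 B12 B21 B22))) :
    IsUnit B11.det ∧ IsUnit B22.det ∧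
    IsNonsingMMatrix (omegaComp ω B11) ∧
    IsNonsingMMatrix (omegaComp ω B22) ∧
    IsNonsingMMatrix (omegaComp ω (B11 - B12 * B22⁻¹ * B21)) ∧
    IsNonsingMMatrix (omegaComp ω (B22 - B21 * B11⁻¹ * B12)) ∧
    ((∀ i, 0 < ((omegaComp ω (Matrix.fromBlocks B11 B12 B21 B22)) *ᵥ 1) i) →
      (∀ i, 0 < ((omegaComp ω B11) *ᵥ 1) i) ∧
      (∀ i, 0 < ((omegaComp ω B22) *ᵥ 1) i) ∧
      (∀ i, 0 < ((omegaComp ω (B11 - B12 * B22⁻¹ * B21)) *ᵥ 1) i) ∧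
      (∀ i, 0 < ((omegaComp ω (B22 - B21 * B11⁻¹ * B12)) *ᵥ 1) i)) := by
  obtain ⟨-, u, hu, hpos⟩ := hM
  obtain ⟨h11, h22, hS11, hS22⟩ := omegaComp_fromBlocks_schur_mulVec_pos hω hu hpos
  have hM11 := isNonsingMMatrix_omegaComp (fun i => hu (Sum.inl i)) h11
  have hM22 := isNonsingMMatrix_omegaComp (fun j => hu (Sum.inr j)) h22
  exact ⟨isUnit_det_of_isNonsingMMatrix_omegaComp hω hM11,
    isUnit_det_of_isNonsingMMatrix_omegaComp hω hM22, hM11, hM22,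
    isNonsingMMatrix_omegaComp (fun i => hu (Sum.inl i)) hS11,
    isNonsingMMatrix_omegaComp (fun j => hu (Sum.inr j)) hS22,
    fun hone => omegaComp_fromBlocks_schur_mulVec_pos hω (fun _ => one_pos) hone⟩
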